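/- For N = 2, identifiability requires range(C^(1)) ∩ range(C^(2)) = {0}: if X^(n) = [M, C^(n)] S^(n)T (n = 1,2) with [M, C^(n)] and S^(n) of full column rank and range(X^(1)) ∩ range(X^(2)) = range(M), then range(C^(1)) ∩ range(C^(2)) = {0}. -/

import Mathlib

/-!
Since `S⁽ⁿ⁾ᵀ` is surjective, `range X⁽ⁿ⁾ = range M + range C⁽ⁿ⁾`. Hence `range C⁽¹⁾ ∩ range C⁽²⁾`
lies in `range X⁽¹⁾ ∩ range X⁽²⁾ = range M`, and it meets `range M` only in `0` because
`[M, C⁽¹⁾]` has full column rank.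
-/

namespace Matrix

variable {R 𝔽 : Type*} {l m n n₁ n₂ : Type*} [Fintype n] [Fintype n₁] [Fintype n₂]

theorem mulVecLin_transpose_surjective_of_injective [Field 𝔽] [Fintype m] [DecidableEq m]
    [DecidableEq n] {A : Matrix m n 𝔽} (h : Function.Injective A.mulVecLin) :
    Function.Surjective Aᵀ.mulVecLin := by
  rw [← LinearMap.range_eq_top]
  apply Submodule.eq_top_of_finrank_eq
  have hrank : A.rank = Fintype.card n := by
    rw [rank, LinearMap.finrank_range_of_inj h, Module.finrank_pi]
  rw [← rank, rank_transpose, hrank, Module.finrank_pi]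

theorem range_mulVecLin_mul_transpose_of_injective [Field 𝔽] [Fintype m] [DecidableEq m]
    [DecidableEq n] (A : Matrix l n 𝔽) {S : Matrix m n 𝔽} (hS : Function.Injective S.mulVecLin) :
    LinearMap.range (A * Sᵀ).mulVecLin = LinearMap.range A.mulVecLin := by
  rw [mulVecLin_mul, LinearMap.range_comp_of_range_eq_top]
  exact LinearMap.range_eq_top.mpr (mulVecLin_transpose_surjective_of_injective hS)

theorem range_fromCols_mulVecLin [CommRing R] (A : Matrix m n₁ R) (B : Matrix m n₂ R) :
    LinearMap.range (fromCols A B).mulVecLin =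
      LinearMap.range A.mulVecLin ⊔ LinearMap.range B.mulVecLin := by
  apply le_antisymm
  · rintro _ ⟨v, rfl⟩
    rw [mulVecLin_apply, fromCols_mulVec]
    exact Submodule.add_mem_sup ⟨_, rfl⟩ ⟨_, rfl⟩
  · refine sup_le ?_ ?_
    · rintro _ ⟨u, rfl⟩
      exact ⟨Sum.elim u 0, by simp⟩
    · rintro _ ⟨v, rfl⟩
      exact ⟨Sum.elim 0 v, by simp⟩

theorem disjoint_range_mulVecLin_of_injective_fromCols [CommRing R] {A : Matrix m n₁ R}
    {B : Matrix m n₂ R} (h : Function.Injective (fromCols A B).mulVecLin) :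
    Disjoint (LinearMap.range A.mulVecLin) (LinearMap.range B.mulVecLin) := by
  rw [Submodule.disjoint_def]
  rintro _ ⟨u, rfl⟩ ⟨v, hv⟩
  have hzero : (fromCols A B).mulVecLin (Sum.elim u (-v)) = 0 := by
    simp only [mulVecLin_apply] at hv ⊢
    rw [fromCols_mulVec_sumElim, mulVec_neg, hv, add_neg_cancel]
  have hu : u = 0 := by
    simpa using congrArg (fun w => w ∘ Sum.inl) (h (hzero.trans (map_zero _).symm))
  simp [hu]

end Matrix

theorem stmt_15_general {𝔽 : Type*} [Field 𝔽] {I R L₁ L₂ K₁ K₂ : ℕ}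
    (M : Matrix (Fin I) (Fin R) 𝔽)
    (C₁ : Matrix (Fin I) (Fin L₁) 𝔽) (C₂ : Matrix (Fin I) (Fin L₂) 𝔽)
    (S₁ : Matrix (Fin K₁) (Fin R ⊕ Fin L₁) 𝔽) (S₂ : Matrix (Fin K₂) (Fin R ⊕ Fin L₂) 𝔽)
    (X₁ : Matrix (Fin I) (Fin K₁) 𝔽) (X₂ : Matrix (Fin I) (Fin K₂) 𝔽)
    (hX₁ : X₁ = Matrix.fromCols M C₁ * S₁.transpose)
    (hX₂ : X₂ = Matrix.fromCols M C₂ * S₂.transpose)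
    (hMC₁ : Function.Injective (Matrix.fromCols M C₁).mulVecLin)
    (hS₁ : Function.Injective S₁.mulVecLin)
    (hS₂ : Function.Injective S₂.mulVecLin)
    (hid : LinearMap.range X₁.mulVecLin ⊓ LinearMap.range X₂.mulVecLin =
      LinearMap.range M.mulVecLin) :
    LinearMap.range C₁.mulVecLin ⊓ LinearMap.range C₂.mulVecLin = ⊥ := by
  have hrange₁ : LinearMap.range X₁.mulVecLin =
      LinearMap.range M.mulVecLin ⊔ LinearMap.range C₁.mulVecLin := by
    rw [hX₁, Matrix.range_mulVecLin_mul_transpose_of_injective _ hS₁,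
      Matrix.range_fromCols_mulVecLin]
  have hrange₂ : LinearMap.range X₂.mulVecLin =
      LinearMap.range M.mulVecLin ⊔ LinearMap.range C₂.mulVecLin := by
    rw [hX₂, Matrix.range_mulVecLin_mul_transpose_of_injective _ hS₂,
      Matrix.range_fromCols_mulVecLin]
  have hle_M : LinearMap.range C₁.mulVecLin ⊓ LinearMap.range C₂.mulVecLin ≤
      LinearMap.range M.mulVecLin := by
    rw [← hid, hrange₁, hrange₂]
    exact inf_le_inf le_sup_right le_sup_right
  rw [eq_bot_iff]
  calc LinearMap.range C₁.mulVecLin ⊓ LinearMap.range C₂.mulVecLin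
      ≤ LinearMap.range M.mulVecLin ⊓ LinearMap.range C₁.mulVecLin := le_inf hle_M inf_le_left
    _ = ⊥ := (Matrix.disjoint_range_mulVecLin_of_injective_fromCols hMC₁).eq_bot

/-- Two-view necessity: if `X⁽ⁿ⁾ = [M, C⁽ⁿ⁾] S⁽ⁿ⁾ᵀ` for `n = 1, 2`, where `M` has full
column rank, `[M, C⁽ⁿ⁾]` and `S⁽ⁿ⁾` have full column rank, and
`range(X⁽¹⁾) ∩ range(X⁽²⁾) = range(M)`, then `range(C⁽¹⁾) ∩ range(C⁽²⁾) = {0}`. -/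
theorem stmt_15 {𝔽 : Type*} [Field 𝔽] {I R L₁ L₂ K₁ K₂ : ℕ}
    (M : Matrix (Fin I) (Fin R) 𝔽)
    (C₁ : Matrix (Fin I) (Fin L₁) 𝔽) (C₂ : Matrix (Fin I) (Fin L₂) 𝔽)
    (S₁ : Matrix (Fin K₁) (Fin R ⊕ Fin L₁) 𝔽) (S₂ : Matrix (Fin K₂) (Fin R ⊕ Fin L₂) 𝔽)
    (X₁ : Matrix (Fin I) (Fin K₁) 𝔽) (X₂ : Matrix (Fin I) (Fin K₂) 𝔽)
    (hX₁ : X₁ = Matrix.fromCols M C₁ * S₁.transpose)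
    (hX₂ : X₂ = Matrix.fromCols M C₂ * S₂.transpose)
    (hM : Function.Injective M.mulVecLin)
    (hMC₁ : Function.Injective (Matrix.fromCols M C₁).mulVecLin)
    (hMC₂ : Function.Injective (Matrix.fromCols M C₂).mulVecLin)
    (hS₁ : Function.Injective S₁.mulVecLin)
    (hS₂ : Function.Injective S₂.mulVecLin)
    (hid : LinearMap.range X₁.mulVecLin ⊓ LinearMap.range X₂.mulVecLin =
      LinearMap.range M.mulVecLin) :
    LinearMap.range C₁.mulVecLin ⊓ LinearMap.range C₂.mulVecLin = ⊥ :=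
  stmt_15_general M C₁ C₂ S₁ S₂ X₁ X₂ hX₁ hX₂ hMC₁ hS₁ hS₂ hid
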